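/- For a closed relation R : K1 → K2 between formal contexts, the assignment ℬ(R)(A,B) := (cl(R(A)), R(A)') is a well-defined map ℬ(K1) → ℬ(K2) that preserves arbitrary suprema. Moreover: (i) the assignment R ↦ ℬ(R) is a bijection from the set of closed relations K1 → K2 onto the set of suprema-preserving maps ℬ(K1) → ℬ(K2); (ii) ℬ(id_K) is the identity on ℬ(K); and (iii) ℬ(S ∘ R) = ℬ(S) ∘ ℬ(R) for closed relations R : K1 → K2 and S : K2 → K3. -/

import Mathlib

open Set

/-- A formal context `(G, M, I)`: a set of objects, a set of attributes,
and an incidence relation between them. -/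
structure FormalContext where
  G : Type*
  M : Type*
  I : G → M → Prop

namespace FormalContext

variable (K : FormalContext)

/-- `A'` for a set of objects `A ⊆ G`. -/
def polarG (A : Set K.G) : Set K.M := upperPolar K.I A

/-- `B'` for a set of attributes `B ⊆ M`. -/
def polarM (B : Set K.M) : Set K.G := lowerPolar K.I B

/-- The closure `cl(A) = A''` of a set of objects. -/
def clG (A : Set K.G) : Set K.G := K.polarM (K.polarG A)

/-- The closure `cl(B) = B''` of a set of attributes. -/
def clM (B : Set K.M) : Set K.M := K.polarG (K.polarM B)

/-- A set of objects is closed when it equals its closure. -/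
def ClosedG (A : Set K.G) : Prop := K.clG A = A

/-- A set of attributes is closed when it equals its closure. -/
def ClosedM (B : Set K.M) : Prop := K.clM B = B

/-- The dual context `K* = (M, G, I†)`. -/
def dual : FormalContext := ⟨K.M, K.G, fun m g => K.I g m⟩

/-- The direct product `K1 ⊗ K2` of formal contexts (Ganter–Wille). -/
def dprod (K1 K2 : FormalContext) : FormalContext :=
  ⟨K1.G × K2.G, K1.M × K2.M, fun g m => K1.I g.1 m.1 ∨ K2.I g.2 m.2⟩

end FormalContext

/-- The trivial context `I = ({⋆},{⋆},≠)`. -/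
def trivCxt : FormalContext := ⟨PUnit, PUnit, fun a b => a ≠ b⟩

/-- The image `R(S)` of a set under a relation. -/
def relImage {X Y : Type*} (R : X → Y → Prop) (S : Set X) : Set Y :=
  {y | ∃ x ∈ S, R x y}

/-- `R^•(T) = {x | R(x) ⊆ T}`. -/
def relDot {X Y : Type*} (R : X → Y → Prop) (T : Set Y) : Set X :=
  {x | ∀ y, R x y → y ∈ T}

/-- `R_•(S) = {y | ∀ x ∈ S, R(x,y)}`. -/
def relLower {X Y : Type*} (R : X → Y → Prop) (S : Set X) : Set Y :=
  {y | ∀ x ∈ S, R x y}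

/-- A closed relation `K1 → K2`: each row `R(g)` is closed in `K2` and
`R^•` preserves closed sets. -/
structure IsClosedRel (K1 K2 : FormalContext) (R : K1.G → K2.G → Prop) : Prop where
  row_closed : ∀ g : K1.G, K2.ClosedG (relImage R {g})
  dot_closed : ∀ Y : Set K2.G, K2.ClosedG Y → K1.ClosedG (relDot R Y)

/-- Composition of closed relations: `(S ∘ R)(g) := cl(S(R(g)))`, closure in `K`. -/
def relComp {X Y : Type*} (K : FormalContext) (S : Y → K.G → Prop) (R : X → Y → Prop) :
    X → K.G → Prop :=
  fun g h => h ∈ K.clG (relImage S (relImage R {g}))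

/-- Composition on the attribute side: `(S ∘ R)(m) := cl(S(R(m)))`, closure on the
attribute side of `K`. -/
def relCompM {X Y : Type*} (K : FormalContext) (S : Y → K.M → Prop) (R : X → Y → Prop) :
    X → K.M → Prop :=
  fun m n => n ∈ K.clM (relImage S (relImage R {m}))

/-- The identity closed relation on `K`: `g ↦ cl({g})`. -/
def idClosedRel (K : FormalContext) : K.G → K.G → Prop := fun g h => h ∈ K.clG {g}

/-- A Chu correspondence `(R,S) : K1 → K2`. -/
structure IsChu (K1 K2 : FormalContext) (R : K1.G → K2.G → Prop) (S : K2.M → K1.M → Prop) :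
    Prop where
  extent_closed : ∀ g : K1.G, K2.ClosedG (relImage R {g})
  intent_closed : ∀ m : K2.M, K1.ClosedM (relImage S {m})
  adj : ∀ (g : K1.G) (m : K2.M),
    (∀ h ∈ relImage R {g}, K2.I h m) ↔ (∀ n ∈ relImage S {m}, K1.I g n)

/-- The intent relation `R*(m) := (R^•(m'))'` of a (closed) relation `R`. -/
def starRel (K1 K2 : FormalContext) (R : K1.G → K2.G → Prop) : K2.M → K1.M → Prop :=
  fun m n => n ∈ K1.polarG (relDot R (K2.polarM {m}))

/-- A bond from `K1` to `K2`: a relation `B ⊆ G1 × M2` with closed rows and columns. -/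
structure IsBond (K1 K2 : FormalContext) (B : K1.G → K2.M → Prop) : Prop where
  row_closed : ∀ g : K1.G, K2.ClosedM (relImage B {g})
  col_closed : ∀ m : K2.M, K1.ClosedG {g | B g m}

/-- The tensor `(R1 ⊗ R2)(g1,g2) := cl(R1(g1) × R2(g2))` of relations, closure in `K3 ⊗ K4`. -/
def tensorRelMor (K3 K4 : FormalContext) {X Y : Type*}
    (R1 : X → K3.G → Prop) (R2 : Y → K4.G → Prop) :
    X × Y → (K3.dprod K4).G → Prop :=
  fun p q => q ∈ (K3.dprod K4).clG (relImage R1 {p.1} ×ˢ relImage R2 {p.2})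

/-- The concept of `K` generated by a set of objects `A`: `(cl(A), A')`. -/
def conceptOfSet (K : FormalContext) (A : Set K.G) : Concept K.G K.M K.I where
  extent := K.clG A
  intent := K.polarG A
  upperPolar_extent := upperPolar_lowerPolar_upperPolar K.I A
  lowerPolar_intent := rfl

/-- The sup-lattice map `ℬ(R)` on concept lattices induced by a relation:
`(A,A') ↦ (cl(R(A)), R(A)')`. -/
def conceptMap (K1 K2 : FormalContext) (R : K1.G → K2.G → Prop) :
    Concept K1.G K1.M K1.I → Concept K2.G K2.M K2.I :=
  fun c => conceptOfSet K2 (relImage R c.extent)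

/-- The incidence relation of the context whose concept lattice is the concept tensor
`V1 ⊗ V2`: `(x,y) ∇ (w,z) iff x ≤ w or y ≤ z`. -/
def tensorRel (V1 V2 : Type*) [CompleteLattice V1] [CompleteLattice V2] :
    V1 × V2 → V1 × V2 → Prop :=
  fun p q => p.1 ≤ q.1 ∨ p.2 ≤ q.2

/-- The concept tensor `V1 ⊗ V2` of complete lattices (Wille's tensor product). -/
abbrev ConceptTensor (V1 V2 : Type*) [CompleteLattice V1] [CompleteLattice V2] :=
  Concept (V1 × V2) (V1 × V2) (tensorRel V1 V2)

/-- The tensorial operation `x ⊼ y`: the concept with extent `cl{(x,y)}` and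
intent `{(x,y)}'`. -/
def wedge {V1 V2 : Type*} [CompleteLattice V1] [CompleteLattice V2] (x : V1) (y : V2) :
    ConceptTensor V1 V2 where
  extent := lowerPolar (tensorRel V1 V2) (upperPolar (tensorRel V1 V2) {(x, y)})
  intent := upperPolar (tensorRel V1 V2) {(x, y)}
  upperPolar_extent := upperPolar_lowerPolar_upperPolar _ _
  lowerPolar_intent := rfl

/-- Two subsets of a complete lattice are mutually distributive: all families indexed
by a set `ι` satisfy the two distributivity laws. -/
def MutuallyDistrib {M : Type u} [CompleteLattice M] (X Y : Set M) : Prop :=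
  ∀ (ι : Type u) (x y : ι → M), (∀ i, x i ∈ X) → (∀ i, y i ∈ Y) →
    ((⨆ i, x i ⊓ y i) = ⨅ J : Set ι, ((⨆ j ∈ J, x j) ⊔ ⨆ k ∈ Jᶜ, y k)) ∧
    ((⨅ i, x i ⊔ y i) = ⨆ J : Set ι, ((⨅ j ∈ J, x j) ⊓ ⨅ k ∈ Jᶜ, y k))

section Aux

open FormalContext Concept

lemma subset_clG (K : FormalContext) (A : Set K.G) : A ⊆ K.clG A :=
  subset_lowerPolar_upperPolar _ _

lemma polarG_clG (K : FormalContext) (A : Set K.G) : K.polarG (K.clG A) = K.polarG A :=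
  upperPolar_lowerPolar_upperPolar _ _

lemma clG_closed (K : FormalContext) (A : Set K.G) : K.ClosedG (K.clG A) :=
  congrArg (lowerPolar K.I) (polarG_clG K A)

lemma clG_mono (K : FormalContext) {A B : Set K.G} (h : A ⊆ B) : K.clG A ⊆ K.clG B :=
  lowerPolar_anti _ (upperPolar_anti _ h)

lemma clG_subset_closed {K : FormalContext} {A B : Set K.G} (h : A ⊆ B) (hB : K.ClosedG B) :
    K.clG A ⊆ B := hB ▸ clG_mono K h

lemma fst_closed (K : FormalContext) (c : Concept K.G K.M K.I) : K.ClosedG c.extent := by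
  show lowerPolar K.I (upperPolar K.I c.extent) = c.extent
  rw [c.upperPolar_extent, c.lowerPolar_intent]

lemma relImage_singleton' {X Y : Type*} (R : X → Y → Prop) (g : X) :
    relImage R {g} = {h | R g h} := by
  ext h; simp [relImage]

lemma relImage_mono {X Y : Type*} (R : X → Y → Prop) {A B : Set X} (h : A ⊆ B) :
    relImage R A ⊆ relImage R B := fun _ ⟨x, hx, hxy⟩ => ⟨x, h hx, hxy⟩

lemma relImage_eq_biUnion {X Y : Type*} (R : X → Y → Prop) (A : Set X) :
    relImage R A = ⋃ g ∈ A, relImage R {g} := by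
  ext h; simp [relImage]

lemma relImage_biUnion {X Y I' : Type*} (R : X → Y → Prop) (s : Set I') (f : I' → Set X) :
    relImage R (⋃ i ∈ s, f i) = ⋃ i ∈ s, relImage R (f i) := by
  ext h
  simp only [relImage, mem_setOf_eq, mem_iUnion]
  exact ⟨fun ⟨x, ⟨i, hi, hxi⟩, hR⟩ => ⟨i, hi, x, hxi, hR⟩,
    fun ⟨i, hi, x, hxi, hR⟩ => ⟨x, ⟨i, hi, hxi⟩, hR⟩⟩

lemma polarG_biUnion_clG (K : FormalContext) {I' : Type*} (s : Set I') (f : I' → Set K.G) :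
    K.polarG (⋃ i ∈ s, K.clG (f i)) = K.polarG (⋃ i ∈ s, f i) := by
  rw [show K.polarG (⋃ i ∈ s, K.clG (f i)) = ⋂ i ∈ s, K.polarG (K.clG (f i)) from
      upperPolar_iUnion₂ _ _,
    show K.polarG (⋃ i ∈ s, f i) = ⋂ i ∈ s, K.polarG (f i) from upperPolar_iUnion₂ _ _]
  simp only [polarG_clG]

lemma clG_biUnion_clG (K : FormalContext) {I' : Type*} (s : Set I') (f : I' → Set K.G) :
    K.clG (⋃ i ∈ s, K.clG (f i)) = K.clG (⋃ i ∈ s, f i) :=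
  congrArg (lowerPolar K.I) (polarG_biUnion_clG K s f)

lemma sSup_fst' (K : FormalContext) (s : Set (Concept K.G K.M K.I)) :
    (sSup s).extent = K.clG (⋃ c ∈ s, c.extent) := by
  show lowerPolar K.I (⋂ c ∈ s, c.intent) = lowerPolar K.I (K.polarG (⋃ c ∈ s, c.extent))
  have h : K.polarG (⋃ c ∈ s, c.extent) = ⋂ c ∈ s, c.intent := by
    rw [show K.polarG (⋃ c ∈ s, c.extent) = ⋂ c ∈ s, K.polarG c.extent from upperPolar_iUnion₂ _ _]
    exact iInter₂_congr fun c _ => c.upperPolar_extent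
  rw [h]

lemma clG_relImage_clG (K1 K2 : FormalContext) (R : K1.G → K2.G → Prop)
    (hR : IsClosedRel K1 K2 R) (A : Set K1.G) :
    K2.clG (relImage R (K1.clG A)) = K2.clG (relImage R A) := by
  apply Set.Subset.antisymm
  · have h1 : A ⊆ relDot R (K2.clG (relImage R A)) := fun g hg y hy =>
      subset_clG K2 _ ⟨g, hg, hy⟩
    have h2 : K1.ClosedG (relDot R (K2.clG (relImage R A))) :=
      hR.dot_closed _ (clG_closed K2 _)
    have h3 : K1.clG A ⊆ relDot R (K2.clG (relImage R A)) := clG_subset_closed h1 h2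
    have h4 : relImage R (K1.clG A) ⊆ K2.clG (relImage R A) := by
      rintro y ⟨g, hg, hgy⟩
      exact h3 hg y hgy
    calc K2.clG (relImage R (K1.clG A)) ⊆ K2.clG (K2.clG (relImage R A)) := clG_mono _ h4
      _ = K2.clG (relImage R A) := clG_closed K2 _
  · exact clG_mono _ (relImage_mono _ (subset_clG K1 A))

lemma conceptMap_fst (K1 K2 : FormalContext) (R : K1.G → K2.G → Prop)
    (c : Concept K1.G K1.M K1.I) :
    (conceptMap K1 K2 R c).extent = K2.clG (relImage R c.extent) := rfl

lemma concept_eq_sSup (K : FormalContext) (c : Concept K.G K.M K.I) :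
    c = sSup ((fun g => conceptOfSet K {g}) '' c.extent) := by
  apply Concept.ext
  rw [sSup_fst', Set.biUnion_image]
  rw [show (⋃ g ∈ c.extent, (conceptOfSet K {g}).extent) = ⋃ g ∈ c.extent, K.clG {g} from rfl]
  rw [clG_biUnion_clG, Set.biUnion_of_singleton]
  exact (fst_closed K c).symm

lemma conceptMap_fst_single (K1 K2 : FormalContext) (R : K1.G → K2.G → Prop)
    (hR : IsClosedRel K1 K2 R) (g : K1.G) :
    (conceptMap K1 K2 R (conceptOfSet K1 {g})).extent = relImage R {g} := by
  rw [conceptMap_fst]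
  rw [show (conceptOfSet K1 {g}).extent = K1.clG {g} from rfl]
  rw [clG_relImage_clG K1 K2 R hR]
  exact hR.row_closed g

lemma conceptMap_sSup (K1 K2 : FormalContext) (R : K1.G → K2.G → Prop)
    (hR : IsClosedRel K1 K2 R) (s : Set (Concept K1.G K1.M K1.I)) :
    conceptMap K1 K2 R (sSup s) = sSup (conceptMap K1 K2 R '' s) := by
  apply Concept.ext
  rw [conceptMap_fst, sSup_fst' K1 s, clG_relImage_clG K1 K2 R hR, sSup_fst' K2,
    Set.biUnion_image, relImage_biUnion]
  rw [show (⋃ c ∈ s, (conceptMap K1 K2 R c).extent) = ⋃ c ∈ s, K2.clG (relImage R c.extent) from rfl]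
  rw [clG_biUnion_clG]

end Aux

/-- `ℬ(R)(A,B) := (cl(R(A)), R(A)')` is a well-defined suprema-preserving
map `ℬ(K1) → ℬ(K2)`; `R ↦ ℬ(R)` is a bijection from closed relations `K1 → K2` onto
suprema-preserving maps `ℬ(K1) → ℬ(K2)`; `ℬ(id) = id`; and `ℬ(S ∘ R) = ℬ(S) ∘ ℬ(R)`. -/
theorem conceptMap_functor (K1 K2 : FormalContext) :
    (∀ R : K1.G → K2.G → Prop, IsClosedRel K1 K2 R →
      (∀ c : Concept K1.G K1.M K1.I,
        (conceptMap K1 K2 R c).extent = K2.clG (relImage R c.extent) ∧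
        (conceptMap K1 K2 R c).intent = K2.polarG (relImage R c.extent)) ∧
      (∀ s : Set (Concept K1.G K1.M K1.I),
        conceptMap K1 K2 R (sSup s) = sSup (conceptMap K1 K2 R '' s))) ∧
    (∀ R S : K1.G → K2.G → Prop, IsClosedRel K1 K2 R → IsClosedRel K1 K2 S →
      conceptMap K1 K2 R = conceptMap K1 K2 S → R = S) ∧
    (∀ f : Concept K1.G K1.M K1.I → Concept K2.G K2.M K2.I,
      (∀ s, f (sSup s) = sSup (f '' s)) →
      ∃ R : K1.G → K2.G → Prop, IsClosedRel K1 K2 R ∧ conceptMap K1 K2 R = f) ∧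
    (conceptMap K1 K1 (idClosedRel K1) = id) ∧
    (∀ (K3 : FormalContext) (R : K1.G → K2.G → Prop) (S : K2.G → K3.G → Prop),
      IsClosedRel K1 K2 R → IsClosedRel K2 K3 S →
      conceptMap K1 K3 (relComp K3 S R) = conceptMap K2 K3 S ∘ conceptMap K1 K2 R) := by
  refine ⟨fun R hR => ⟨fun c => ⟨rfl, rfl⟩, conceptMap_sSup K1 K2 R hR⟩, ?_, ?_, ?_, ?_⟩
  · -- injectivity
    intro R S hR hS h
    funext g y
    have e : relImage R {g} = relImage S {g} := by
      rw [← conceptMap_fst_single K1 K2 R hR g, ← conceptMap_fst_single K1 K2 S hS g, h]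
    have : y ∈ relImage R {g} ↔ y ∈ relImage S {g} := by rw [e]
    simp only [relImage_singleton', mem_setOf_eq] at this
    exact propext this
  · -- surjectivity
    intro f hf
    have hmono : Monotone f := by
      intro c d hcd
      have h1 : f (c ⊔ d) = f c ⊔ f d := by
        have := hf {c, d}
        rwa [sSup_pair, Set.image_pair, sSup_pair] at this
      have h2 : f c ⊔ f d = f d := by rw [← h1, sup_eq_right.mpr hcd]
      exact le_sup_left.trans h2.le
    set γ : K1.G → Concept K1.G K1.M K1.I := fun g => conceptOfSet K1 {g} with hγ
    set R : K1.G → K2.G → Prop := fun g h => h ∈ (f (γ g)).extent with hRdef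
    have himg : ∀ g, relImage R {g} = (f (γ g)).extent := by
      intro g; ext y; simp [relImage, hRdef]
    set g' : Concept K2.G K2.M K2.I → Concept K1.G K1.M K1.I :=
      fun d => sSup {c | f c ≤ d} with hg'
    have adj : ∀ c d, f c ≤ d ↔ c ≤ g' d := by
      intro c d
      constructor
      · intro h; exact le_sSup h
      · intro h
        calc f c ≤ f (g' d) := hmono h
          _ = sSup (f '' {c | f c ≤ d}) := hf _
          _ ≤ d := sSup_le (by rintro x ⟨c', hc', rfl⟩; exact hc')
    have hRclosed : IsClosedRel K1 K2 R := by
      constructor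
      · intro g; rw [himg]; exact fst_closed K2 _
      · intro Y hY
        let d : Concept K2.G K2.M K2.I := ⟨Y, K2.polarG Y, rfl, hY⟩
        have hdot : relDot R Y = (g' d).extent := by
          ext g
          constructor
          · intro hg
            have h1 : f (γ g) ≤ d := fun y hy => hg y hy
            have h2 : γ g ≤ g' d := (adj _ _).mp h1
            exact Concept.extent_subset_extent_iff.mpr h2 (subset_clG K1 {g} rfl)
          · intro hg y hy
            have h1 : γ g ≤ g' d :=
              Concept.extent_subset_extent_iff.mp
                (clG_subset_closed (singleton_subset_iff.mpr hg) (fst_closed K1 _))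
            have h2 : f (γ g) ≤ d := (adj _ _).mpr h1
            exact Concept.extent_subset_extent_iff.mpr h2 hy
        rw [hdot]; exact fst_closed K1 _
    refine ⟨R, hRclosed, ?_⟩
    funext c
    apply Concept.ext
    rw [conceptMap_fst]
    conv_rhs => rw [concept_eq_sSup K1 c]
    rw [hf, ← Set.image_comp, sSup_fst' K2, Set.biUnion_image]
    rw [show (⋃ g ∈ c.extent, ((f ∘ γ) g).extent) = ⋃ g ∈ c.extent, relImage R {g} by
      refine iUnion₂_congr fun g _ => ?_
      rw [himg]; rfl]
    rw [← relImage_eq_biUnion]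
  · -- identity
    funext c
    apply Concept.ext
    rw [conceptMap_fst]
    have h1 : relImage (idClosedRel K1) c.extent = ⋃ g ∈ c.extent, K1.clG {g} := by
      rw [relImage_eq_biUnion]
      refine iUnion₂_congr fun g _ => ?_
      ext y; simp [relImage, idClosedRel]
    rw [h1, clG_biUnion_clG, Set.biUnion_of_singleton]
    exact fst_closed K1 c
  · -- composition
    intro K3 R S hR hS
    funext c
    apply Concept.ext
    rw [show (conceptMap K2 K3 S ∘ conceptMap K1 K2 R) c =
        conceptMap K2 K3 S (conceptMap K1 K2 R c) from rfl]
    rw [conceptMap_fst, conceptMap_fst, conceptMap_fst,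
      clG_relImage_clG K2 K3 S hS]
    have h1 : relImage (relComp K3 S R) c.extent =
        ⋃ g ∈ c.extent, K3.clG (relImage S (relImage R {g})) := by
      rw [relImage_eq_biUnion]
      refine iUnion₂_congr fun g _ => ?_
      ext y; simp [relImage, relComp]
    rw [h1, clG_biUnion_clG, relImage_eq_biUnion R c.extent, relImage_biUnion]
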